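/- The non-asymptotic minimum average cost to erase information equals the single-letter expression: C*_a(n,ε) = min over RVs X̂ with Y − X − X̂ and I(Y;X̂) ≤ ε/n of E[c(X,X̂)]. -/

import Mathlib

open scoped BigOperators

noncomputable def MI {α β : Type*} [Fintype α] [Fintype β] (p : α → β → ℝ) : ℝ :=
  ∑ a, ∑ b, p a b * Real.log (p a b / ((∑ b', p a b') * (∑ a', p a' b)))

def IsPMF2 {α β : Type*} [Fintype α] [Fintype β] (p : α → β → ℝ) : Prop :=
  (∀ a b, 0 ≤ p a b) ∧ ∑ a, ∑ b, p a b = 1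

def IsChannel {α β : Type*} [Fintype β] (K : α → β → ℝ) : Prop :=
  (∀ a b, 0 ≤ K a b) ∧ ∀ a, ∑ b, K a b = 1

/-- Joint pmf of `(Y^n, X^n, X̂^n)` where `(X_i,Y_i)` are i.i.d. `∼ pxy`
and `X̂^n` is produced from `X^n` by the channel `W`. -/
noncomputable def iidJoint {X Y Xh : Type*} [Fintype X] (n : ℕ) (pxy : X → Y → ℝ)
    (W : (Fin n → X) → (Fin n → Xh) → ℝ) :
    (Fin n → Y) → (Fin n → X) → (Fin n → Xh) → ℝ :=
  fun yn xn zn => (∏ i, pxy (xn i) (yn i)) * W xn zn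

/-- Expected additive cost `E[(1/n) ∑_i c(X_i, X̂_i)]` for the i.i.d. source with
one-letter joint `pxy` and encoder `W`. -/
noncomputable def costn {X Y Xh : Type*} [Fintype X] [Fintype Y] [Fintype Xh] (n : ℕ)
    (pxy : X → Y → ℝ) (W : (Fin n → X) → (Fin n → Xh) → ℝ) (c : X → Xh → ℝ) : ℝ :=
  ∑ xn, ∑ zn, (∏ i, ∑ y, pxy (xn i) y) * W xn zn * ((1 / (n : ℝ)) * ∑ i, c (xn i) (zn i))

/-- Single-letter joint pmf of `(Y, X̂)` under the Markov chain `Y − X − X̂`. -/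
noncomputable def singleYZ {X Y Xh : Type*} [Fintype X] (pxy : X → Y → ℝ)
    (K : X → Xh → ℝ) : Y → Xh → ℝ :=
  fun y z => ∑ x, pxy x y * K x z

/-- Single-letter expected cost `E[c(X, X̂)]`. -/
noncomputable def singleCost {X Y Xh : Type*} [Fintype X] [Fintype Y] [Fintype Xh]
    (pxy : X → Y → ℝ) (K : X → Xh → ℝ) (c : X → Xh → ℝ) : ℝ :=
  ∑ x, ∑ z, (∑ y, pxy x y) * K x z * c x z

/-!
Achievability: the memoryless encoder `K^{⊗n}` makes `(Y_i, X̂_i)` i.i.d. with law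
`singleYZ pxy K`, so it leaks exactly `n · I(Y; X̂)` and costs `E c(X, X̂)`.

Converse: an encoder `W` induces channels `K_i` from `X_i` to `X̂_i`, and `(Y_i, X̂_i)` has law
`singleYZ pxy K_i` because `Y_i − X_i − X̂_i`. Their average `K̄` has the cost of `W`. Since
`Y^n` is i.i.d., `I(Y^n; X̂^n) − ∑ I(Y_i; X̂_i)` is the relative entropy of `P_{Y^n X̂^n}` to
`P_{X̂^n} ∏ P_{Y_i | X̂_i}`, hence nonnegative by Gibbs' inequality; and for a fixed input law
mutual information is convex in the channel (log-sum inequality). So `I(Y; X̂) ≤ ε / n` under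
`K̄`. The two sets of costs therefore dominate each other, and their infima agree.
-/

open Finset Real

lemma mul_log_add_sub_le_mul_log_div {a b t : ℝ} (ha : 0 ≤ a) (hb : 0 ≤ b) (hab : b = 0 → a = 0)
    (ht : 0 < t) : a * log t + a - t * b ≤ a * log (a / b) := by
  rcases ha.eq_or_lt with rfl | ha
  · simp only [zero_mul, add_zero, zero_sub, neg_nonpos]; positivity
  have hb : 0 < b := hb.lt_of_ne fun h => ha.ne' (hab h.symm)
  have hlog : log (t * b / a) ≤ t * b / a - 1 := log_le_sub_one_of_pos (by positivity)
  rw [log_div (by positivity) ha.ne', log_mul ht.ne' hb.ne'] at hlog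
  rw [log_div ha.ne' hb.ne']
  have hmul : a * (t * b / a) = t * b := mul_div_cancel₀ _ ha.ne'
  nlinarith [mul_le_mul_of_nonneg_left hlog ha.le]

lemma sum_mul_log_div_le {ι : Type*} (s : Finset ι) {a b : ι → ℝ} (ha : ∀ i ∈ s, 0 ≤ a i)
    (hb : ∀ i ∈ s, 0 ≤ b i) (hab : ∀ i ∈ s, b i = 0 → a i = 0) :
    (∑ i ∈ s, a i) * log ((∑ i ∈ s, a i) / ∑ i ∈ s, b i) ≤ ∑ i ∈ s, a i * log (a i / b i) := by
  rcases (sum_nonneg ha).eq_or_lt with hA | hA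
  · rw [← hA, zero_mul]
    refine sum_nonneg fun i hi => ?_
    rw [(sum_eq_zero_iff_of_nonneg ha).1 hA.symm i hi, zero_mul]
  have hB : 0 < ∑ i ∈ s, b i := (sum_nonneg hb).lt_of_ne fun hB => hA.ne' <|
    sum_eq_zero fun i hi => hab i hi ((sum_eq_zero_iff_of_nonneg hb).1 hB.symm i hi)
  have key := sum_le_sum fun i hi =>
    mul_log_add_sub_le_mul_log_div (ha i hi) (hb i hi) (hab i hi) (div_pos hA hB)
  rw [sum_sub_distrib, sum_add_distrib, ← sum_mul, ← mul_sum, div_mul_cancel₀ _ hB.ne'] at key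
  linarith

lemma gibbs_inequality {ι : Type*} (s : Finset ι) {a b : ι → ℝ} (ha : ∀ i ∈ s, 0 ≤ a i)
    (hb : ∀ i ∈ s, 0 ≤ b i) (hab : ∀ i ∈ s, b i = 0 → a i = 0) (ha1 : ∑ i ∈ s, a i = 1)
    (hb1 : ∑ i ∈ s, b i ≤ 1) : 0 ≤ ∑ i ∈ s, a i * log (a i / b i) := by
  have key := sum_le_sum fun i hi =>
    mul_log_add_sub_le_mul_log_div (ha i hi) (hb i hi) (hab i hi) one_pos
  simp only [log_one, mul_zero, zero_add, one_mul] at key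
  rw [sum_sub_distrib, ha1] at key
  linarith

lemma sum_pi_mul_prod_erase {ι T : Type*} [Fintype ι] [DecidableEq ι] [Fintype T]
    (f : ι → T → ℝ) (g : T → ℝ) (i : ι) :
    ∑ x : ι → T, g (x i) * ∏ j ∈ univ.erase i, f j (x j) =
      (∑ t, g t) * ∏ j ∈ univ.erase i, ∑ t, f j t := by
  have hupd (x : ι → T) : g (x i) * ∏ j ∈ univ.erase i, f j (x j) =
      ∏ j, Function.update f i g j (x j) := by
    rw [← mul_prod_erase _ _ (mem_univ i), Function.update_self]
    congr 1
    exact prod_congr rfl fun j hj => by rw [Function.update_of_ne (ne_of_mem_erase hj)]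
  simp only [hupd, ← Fintype.prod_sum]
  rw [← mul_prod_erase _ _ (mem_univ i), Function.update_self]
  congr 1
  exact prod_congr rfl fun j hj => by rw [Function.update_of_ne (ne_of_mem_erase hj)]

lemma sum_pi_prod_mul_apply {ι T : Type*} [Fintype ι] [DecidableEq ι] [Fintype T]
    {q : T → ℝ} (hq : ∑ t, q t = 1) (g : T → ℝ) (i : ι) :
    ∑ x : ι → T, (∏ j, q (x j)) * g (x i) = ∑ t, q t * g t := by
  have := sum_pi_mul_prod_erase (fun _ => q) (fun t => q t * g t) i
  simp only [hq, prod_const_one, mul_one] at this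
  rw [← this]
  refine sum_congr rfl fun x _ => ?_
  rw [← mul_prod_erase _ _ (mem_univ i)]
  ring

lemma sum_sum_eq_sum_pi_prod {ι Y Z : Type*} [Fintype ι] [DecidableEq ι] [Fintype Y] [Fintype Z]
    (F : (ι → Y) → (ι → Z) → ℝ) :
    ∑ y, ∑ z, F y z = ∑ w : ι → Y × Z, F (fun j => (w j).1) (fun j => (w j).2) := by
  rw [← Fintype.sum_prod_type',
    ← (Equiv.arrowProdEquivProdArrow ι (fun _ => Y) (fun _ => Z)).sum_comp]
  rfl

lemma sum_sum_mul_prod_div_sum_le {ι α β : Type*} [Fintype ι] [DecidableEq ι] [Fintype α]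
    [Fintype β] {Q : ι → α → β → ℝ} (hQ : ∀ i a b, 0 ≤ Q i a b)
    {u : (ι → β) → ℝ} (hu : ∀ bn, 0 ≤ u bn) :
    ∑ an : ι → α, ∑ bn, u bn * ∏ i, Q i (an i) (bn i) / ∑ a, Q i a (bn i) ≤ ∑ bn, u bn := by
  rw [sum_comm]
  refine sum_le_sum fun bn _ => ?_
  rw [← mul_sum, ← Fintype.prod_sum (fun i a => Q i a (bn i) / ∑ a', Q i a' (bn i))]
  refine mul_le_of_le_one_right (hu bn) (prod_le_one (fun i _ => ?_) fun i _ => ?_)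
  · exact sum_nonneg fun a _ => div_nonneg (hQ i a _) (sum_nonneg fun a' _ => hQ i a' _)
  · rw [← sum_div]
    exact div_self_le_one _

lemma sum_ne_zero_of_nonneg_of_ne_zero {ι : Type*} [Fintype ι] {f : ι → ℝ} (hf : ∀ i, 0 ≤ f i)
    {i : ι} (hi : f i ≠ 0) : ∑ j, f j ≠ 0 :=
  fun h => hi ((sum_eq_zero_iff_of_nonneg fun j _ => hf j).1 h i (mem_univ i))

lemma mul_log_prod {ι : Type*} (s : Finset ι) {x : ℝ} {r : ι → ℝ}
    (hr : x ≠ 0 → ∀ i ∈ s, r i ≠ 0) : x * log (∏ i ∈ s, r i) = ∑ i ∈ s, x * log (r i) := by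
  by_cases hx : x = 0
  · simp [hx]
  · rw [log_prod (hr hx), mul_sum]

lemma mul_log_div_prod_mul_eq {ι : Type*} (s : Finset ι) {x u : ℝ} {v y : ι → ℝ}
    (h : x ≠ 0 → u ≠ 0 ∧ ∀ i ∈ s, v i ≠ 0 ∧ y i ≠ 0) :
    x * log (x / ((∏ i ∈ s, y i) * u)) =
      x * log (x / (u * ∏ i ∈ s, v i)) + ∑ i ∈ s, x * log (v i / y i) := by
  rcases eq_or_ne x 0 with rfl | hx
  · simp
  obtain ⟨hu, hvy⟩ := h hx
  have hr : ∀ i ∈ s, v i / y i ≠ 0 := fun i hi => div_ne_zero (hvy i hi).1 (hvy i hi).2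
  have hV : ∏ i ∈ s, v i ≠ 0 := prod_ne_zero_iff.2 fun i hi => (hvy i hi).1
  have hY : ∏ i ∈ s, y i ≠ 0 := prod_ne_zero_iff.2 fun i hi => (hvy i hi).2
  rw [← mul_log_prod s fun _ => hr, ← mul_add, ← log_mul (by positivity) (prod_ne_zero_iff.2 hr),
    prod_div_distrib]
  congr 2
  field_simp

section MutualInformation

variable {α β : Type*} [Fintype α] [Fintype β]

lemma MI_eq_of_sum_right {p : α → β → ℝ} {pA : α → ℝ} (h : ∀ a, ∑ b, p a b = pA a) :
    MI p = ∑ a, ∑ b, p a b * log (p a b / (pA a * ∑ a', p a' b)) := by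
  simp only [MI, h]

lemma MI_pi {ι : Type*} [Fintype ι] [DecidableEq ι] {q : α → β → ℝ} (hq0 : ∀ a b, 0 ≤ q a b)
    (hq1 : ∑ a, ∑ b, q a b = 1) :
    MI (fun (an : ι → α) (bn : ι → β) => ∏ i, q (an i) (bn i)) = Fintype.card ι * MI q := by
  set L : α → β → ℝ := fun a b => log (q a b / ((∑ b', q a b') * ∑ a', q a' b))
  have hpoint (an : ι → α) (bn : ι → β) :
      (∏ i, q (an i) (bn i)) * log ((∏ i, q (an i) (bn i)) /
        ((∑ bn' : ι → β, ∏ i, q (an i) (bn' i)) * ∑ an' : ι → α, ∏ i, q (an' i) (bn i))) =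
      ∑ i, (∏ j, q (an j) (bn j)) * L (an i) (bn i) := by
    rw [← Fintype.prod_sum (fun i b => q (an i) b), ← Fintype.prod_sum (fun i a => q a (bn i)),
      ← prod_mul_distrib, ← prod_div_distrib]
    refine mul_log_prod _ fun h i _ => ?_
    have hi : q (an i) (bn i) ≠ 0 := prod_ne_zero_iff.1 h i (mem_univ i)
    exact div_ne_zero hi (mul_ne_zero (sum_ne_zero_of_nonneg_of_ne_zero (hq0 _) hi)
      (sum_ne_zero_of_nonneg_of_ne_zero (fun a => hq0 a _) hi))
  have hcoord (i : ι) :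
      ∑ an : ι → α, ∑ bn : ι → β, (∏ j, q (an j) (bn j)) * L (an i) (bn i) = MI q := by
    rw [sum_sum_eq_sum_pi_prod (fun an bn => (∏ j, q (an j) (bn j)) * L (an i) (bn i)),
      sum_pi_prod_mul_apply (q := fun p : α × β => q p.1 p.2) (by rwa [Fintype.sum_prod_type])
        (fun p => L p.1 p.2) i, Fintype.sum_prod_type]
    rfl
  calc MI (fun (an : ι → α) (bn : ι → β) => ∏ i, q (an i) (bn i))
      = ∑ an : ι → α, ∑ bn : ι → β, ∑ i, (∏ j, q (an j) (bn j)) * L (an i) (bn i) :=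
        sum_congr rfl fun an _ => sum_congr rfl fun bn _ => hpoint an bn
    _ = ∑ i, ∑ an : ι → α, ∑ bn : ι → β, (∏ j, q (an j) (bn j)) * L (an i) (bn i) :=
        (sum_congr rfl fun _ _ => sum_comm).trans sum_comm
    _ = Fintype.card ι * MI q := by simp only [hcoord, sum_const, card_univ, nsmul_eq_mul]

lemma MI_sum_mul_le {ι : Type*} [Fintype ι] {w : ι → ℝ} (hw0 : ∀ i, 0 ≤ w i)
    (hw1 : ∑ i, w i = 1) {p : ι → α → β → ℝ} (hp0 : ∀ i a b, 0 ≤ p i a b) {pA : α → ℝ}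
    (hpA : ∀ i a, ∑ b, p i a b = pA a) :
    MI (fun a b => ∑ i, w i * p i a b) ≤ ∑ i, w i * MI (p i) := by
  set T : ι → α → β → ℝ := fun i a b => p i a b * log (p i a b / (pA a * ∑ a', p i a' b))
  have hT (i : ι) : MI (p i) = ∑ a, ∑ b, T i a b := MI_eq_of_sum_right (hpA i)
  have hmix (a : α) : ∑ b, ∑ i, w i * p i a b = pA a := by
    rw [sum_comm]
    simp only [← mul_sum, hpA, ← sum_mul, hw1, one_mul]
  have hlogsum (a : α) (b : β) :
      (∑ i, w i * p i a b) * log ((∑ i, w i * p i a b) / (pA a * ∑ a', ∑ i, w i * p i a' b)) ≤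
        ∑ i, w i * T i a b := by
    have hle_pA (i : ι) : p i a b ≤ pA a :=
      hpA i a ▸ single_le_sum (fun b _ => hp0 i a b) (mem_univ b)
    have hle_R (i : ι) : p i a b ≤ ∑ a', p i a' b :=
      single_le_sum (fun a' _ => hp0 i a' b) (mem_univ a)
    have hB : ∑ i, w i * (pA a * ∑ a', p i a' b) = pA a * ∑ a', ∑ i, w i * p i a' b := by
      simp only [mul_sum]
      rw [sum_comm]
      exact sum_congr rfl fun _ _ => sum_congr rfl fun _ _ => by ring
    rw [← hB]
    refine (sum_mul_log_div_le univ (fun i _ => mul_nonneg (hw0 i) (hp0 i a b))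
      (fun i _ => mul_nonneg (hw0 i) (mul_nonneg ((hp0 i a b).trans (hle_pA i))
        ((hp0 i a b).trans (hle_R i)))) fun i _ h => ?_).trans_eq (sum_congr rfl fun i _ => ?_)
    · rcases mul_eq_zero.1 h with h | h
      · simp [h]
      rcases mul_eq_zero.1 h with h | h
      · simp [le_antisymm (h ▸ hle_pA i) (hp0 i a b)]
      · simp [le_antisymm (h ▸ hle_R i) (hp0 i a b)]
    · rcases eq_or_ne (w i) 0 with hw | hw
      · simp [hw]
      · rw [mul_div_mul_left _ _ hw, mul_assoc]
  calc MI (fun a b => ∑ i, w i * p i a b)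
      ≤ ∑ a, ∑ b, ∑ i, w i * T i a b := by
        rw [MI_eq_of_sum_right hmix]
        exact sum_le_sum fun a _ => sum_le_sum fun b _ => hlogsum a b
    _ = ∑ i, w i * MI (p i) := by
        simp only [hT, mul_sum]
        conv_rhs => rw [sum_comm]
        exact sum_congr rfl fun _ _ => sum_comm

end MutualInformation

section CoordMarginal

variable {ι α β : Type*} [Fintype ι] [DecidableEq ι] [Fintype α] [Fintype β]
  [DecidableEq α] [DecidableEq β]

def coordMarginal (P : (ι → α) → (ι → β) → ℝ) (i : ι) (a : α) (b : β) : ℝ :=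
  ∑ an, ∑ bn, if an i = a ∧ bn i = b then P an bn else 0

variable {P : (ι → α) → (ι → β) → ℝ}

lemma sum_mul_coordMarginal (i : ι) (g : α → β → ℝ) :
    ∑ a, ∑ b, coordMarginal P i a b * g a b = ∑ an, ∑ bn, P an bn * g (an i) (bn i) := by
  have hcollapse (an : ι → α) (bn : ι → β) :
      ∑ a, ∑ b, (if an i = a ∧ bn i = b then P an bn * g a b else 0) =
        P an bn * g (an i) (bn i) := by
    simp [ite_and]
  simp only [coordMarginal, sum_mul, ite_mul, zero_mul, ← hcollapse]
  exact (sum_congr rfl fun _ _ => sum_comm.trans (sum_congr rfl fun _ _ => sum_comm)).trans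
    (sum_comm.trans (sum_congr rfl fun _ _ => sum_comm))

lemma coordMarginal_nonneg (hP0 : ∀ an bn, 0 ≤ P an bn) (i : ι) (a : α) (b : β) :
    0 ≤ coordMarginal P i a b :=
  sum_nonneg fun an _ => sum_nonneg fun bn _ => by split_ifs <;> simp [hP0]

lemma le_coordMarginal (hP0 : ∀ an bn, 0 ≤ P an bn) (i : ι) (an : ι → α) (bn : ι → β) :
    P an bn ≤ coordMarginal P i (an i) (bn i) := by
  have h0 (an' : ι → α) (bn' : ι → β) :
      0 ≤ if an' i = an i ∧ bn' i = bn i then P an' bn' else 0 := by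
    split_ifs <;> simp [hP0]
  calc P an bn = if an i = an i ∧ bn i = bn i then P an bn else 0 := by simp
    _ ≤ ∑ bn', if an i = an i ∧ bn' i = bn i then P an bn' else 0 :=
        single_le_sum (fun bn' _ => h0 an bn') (mem_univ bn)
    _ ≤ coordMarginal P i (an i) (bn i) :=
        single_le_sum (fun an' _ => sum_nonneg fun bn' _ => h0 an' bn') (mem_univ an)

lemma sum_coordMarginal_right (i : ι) (a : α) :
    ∑ b, coordMarginal P i a b = ∑ an, if an i = a then ∑ bn, P an bn else 0 := by
  have h := sum_mul_coordMarginal (P := P) i fun a' _ => if a' = a then 1 else 0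
  simpa only [mul_ite, mul_one, mul_zero, sum_ite_irrel, sum_const_zero, sum_ite_eq', mem_univ,
    if_true] using h

lemma sum_coordMarginal_right_of_pi {pA : α → ℝ} (hpA : ∑ a, pA a = 1)
    (hPA : ∀ an, ∑ bn, P an bn = ∏ j, pA (an j)) (i : ι) (a : α) :
    ∑ b, coordMarginal P i a b = pA a := by
  simpa [sum_coordMarginal_right, hPA, mul_ite] using
    sum_pi_prod_mul_apply hpA (fun t => if t = a then (1 : ℝ) else 0) i

-- `P_{B^n}(bn) * ∏ i, P_{A_i | B_i}(an i | bn i)`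
noncomputable def coordCondProduct (P : (ι → α) → (ι → β) → ℝ) (an : ι → α) (bn : ι → β) : ℝ :=
  (∑ an', P an' bn) * ∏ i, coordMarginal P i (an i) (bn i) / ∑ a, coordMarginal P i a (bn i)

lemma coordMarginal_div_sum_ne_zero (hP0 : ∀ an bn, 0 ≤ P an bn) {an : ι → α} {bn : ι → β}
    (h : P an bn ≠ 0) (i : ι) :
    coordMarginal P i (an i) (bn i) / ∑ a, coordMarginal P i a (bn i) ≠ 0 := by
  have hc : coordMarginal P i (an i) (bn i) ≠ 0 :=
    (((hP0 an bn).lt_of_ne' h).trans_le (le_coordMarginal hP0 i an bn)).ne'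
  exact div_ne_zero hc
    (sum_ne_zero_of_nonneg_of_ne_zero (fun a => coordMarginal_nonneg hP0 i a _) hc)

lemma coordCondProduct_ne_zero (hP0 : ∀ an bn, 0 ≤ P an bn) {an : ι → α} {bn : ι → β}
    (h : P an bn ≠ 0) : coordCondProduct P an bn ≠ 0 :=
  mul_ne_zero (sum_ne_zero_of_nonneg_of_ne_zero (fun an' => hP0 an' bn) h)
    (prod_ne_zero_iff.2 fun i _ => coordMarginal_div_sum_ne_zero hP0 h i)

lemma sum_sum_coordCondProduct_le (hP0 : ∀ an bn, 0 ≤ P an bn) :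
    ∑ an, ∑ bn, coordCondProduct P an bn ≤ ∑ an, ∑ bn, P an bn := by
  refine (sum_sum_mul_prod_div_sum_le (coordMarginal_nonneg hP0)
    (fun bn => sum_nonneg fun an _ => hP0 an bn)).trans_eq ?_
  exact sum_comm

lemma MI_sub_sum_MI_coordMarginal (hP0 : ∀ an bn, 0 ≤ P an bn) {pA : α → ℝ}
    (hpA : ∑ a, pA a = 1) (hPA : ∀ an, ∑ bn, P an bn = ∏ j, pA (an j)) :
    MI P - ∑ i, MI (coordMarginal P i) =
      ∑ an, ∑ bn, P an bn * log (P an bn / coordCondProduct P an bn) := by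
  set V : ι → (ι → α) → (ι → β) → ℝ := fun i an bn =>
    coordMarginal P i (an i) (bn i) / ∑ a, coordMarginal P i a (bn i)
  have hMI_coord (i : ι) : MI (coordMarginal P i) =
      ∑ an, ∑ bn, P an bn * log (V i an bn / pA (an i)) := by
    rw [MI_eq_of_sum_right (sum_coordMarginal_right_of_pi hpA hPA i), sum_mul_coordMarginal i
      fun a b => log (coordMarginal P i a b / (pA a * ∑ a', coordMarginal P i a' b))]
    simp only [V, div_mul_eq_div_div_swap]
  have hne (an : ι → α) (bn : ι → β) (h : P an bn ≠ 0) :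
      ∑ an', P an' bn ≠ 0 ∧ ∀ i ∈ univ, V i an bn ≠ 0 ∧ pA (an i) ≠ 0 := by
    refine ⟨sum_ne_zero_of_nonneg_of_ne_zero (fun an' => hP0 an' bn) h,
      fun i _ => ⟨coordMarginal_div_sum_ne_zero hP0 h i, ?_⟩⟩
    rw [← sum_coordMarginal_right_of_pi hpA hPA i]
    exact sum_ne_zero_of_nonneg_of_ne_zero (coordMarginal_nonneg hP0 i _)
      (div_ne_zero_iff.1 (coordMarginal_div_sum_ne_zero hP0 h i)).1
  rw [MI_eq_of_sum_right hPA, sub_eq_iff_eq_add]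
  simp only [hMI_coord]
  conv_rhs => enter [2]; rw [sum_comm]
  rw [← sum_add_distrib]
  refine sum_congr rfl fun an _ => ?_
  conv_rhs => enter [2]; rw [sum_comm]
  rw [← sum_add_distrib]
  exact sum_congr rfl fun bn _ => mul_log_div_prod_mul_eq univ (hne an bn)

theorem sum_MI_coordMarginal_le (hP0 : ∀ an bn, 0 ≤ P an bn) (hP1 : ∑ an, ∑ bn, P an bn = 1)
    {pA : α → ℝ} (hpA : ∑ a, pA a = 1) (hPA : ∀ an, ∑ bn, P an bn = ∏ j, pA (an j)) :
    ∑ i, MI (coordMarginal P i) ≤ MI P := by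
  have hgibbs : 0 ≤ ∑ an, ∑ bn, P an bn * log (P an bn / coordCondProduct P an bn) := by
    simpa only [Fintype.sum_prod_type] using gibbs_inequality univ
      (a := fun p : (ι → α) × (ι → β) => P p.1 p.2) (b := fun p => coordCondProduct P p.1 p.2)
      (fun p _ => hP0 p.1 p.2)
      (fun p _ => mul_nonneg (sum_nonneg fun an _ => hP0 an p.2) (prod_nonneg fun i _ =>
        div_nonneg (coordMarginal_nonneg hP0 i _ _)
          (sum_nonneg fun a _ => coordMarginal_nonneg hP0 i a _)))
      (fun p _ => not_imp_not.1 (coordCondProduct_ne_zero hP0))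
      (by rwa [Fintype.sum_prod_type])
      (by simpa only [Fintype.sum_prod_type, hP1] using sum_sum_coordCondProduct_le hP0)
  linarith [MI_sub_sum_MI_coordMarginal hP0 hpA hPA]

end CoordMarginal

section CoordChannel

variable {ι X Xh : Type*} [Fintype ι] [DecidableEq ι] [Fintype X] [Fintype Xh]
  [DecidableEq X] [DecidableEq Xh]

-- The law of `X̂_i` given `X_i = x` when the other letters are i.i.d. `pX`; fixing `X_i = x`
-- instead of dividing by `pX x` keeps it a channel even where `pX x = 0`.
def coordChannel (pX : X → ℝ) (W : (ι → X) → (ι → Xh) → ℝ) (i : ι) : X → Xh → ℝ :=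
  coordMarginal (fun xn zn => (∏ j ∈ univ.erase i, pX (xn j)) * W xn zn) i

lemma sum_mul_coordChannel (pX : X → ℝ) (W : (ι → X) → (ι → Xh) → ℝ) (i : ι)
    (G : X → Xh → ℝ) :
    ∑ x, ∑ z, pX x * coordChannel pX W i x z * G x z =
      ∑ xn, ∑ zn, (∏ j, pX (xn j)) * W xn zn * G (xn i) (zn i) := by
  calc ∑ x, ∑ z, pX x * coordChannel pX W i x z * G x z
      = ∑ x, ∑ z, coordChannel pX W i x z * (pX x * G x z) :=
        sum_congr rfl fun _ _ => sum_congr rfl fun _ _ => by ring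
    _ = ∑ xn, ∑ zn, (∏ j ∈ univ.erase i, pX (xn j)) * W xn zn * (pX (xn i) * G (xn i) (zn i)) :=
        sum_mul_coordMarginal i _
    _ = ∑ xn, ∑ zn, (∏ j, pX (xn j)) * W xn zn * G (xn i) (zn i) :=
        sum_congr rfl fun xn _ => sum_congr rfl fun zn _ => by
          rw [← mul_prod_erase _ _ (mem_univ i)]
          ring

lemma isChannel_coordChannel {pX : X → ℝ} (hpX0 : ∀ x, 0 ≤ pX x) (hpX1 : ∑ x, pX x = 1)
    {W : (ι → X) → (ι → Xh) → ℝ} (hW : IsChannel W) (i : ι) :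
    IsChannel (coordChannel pX W i) := by
  refine ⟨coordMarginal_nonneg (fun xn zn => mul_nonneg (prod_nonneg fun j _ => hpX0 _)
    (hW.1 xn zn)) i, fun x => ?_⟩
  rw [coordChannel, sum_coordMarginal_right]
  simp only [← mul_sum, hW.2, mul_one]
  simpa [ite_mul, hpX1] using
    sum_pi_mul_prod_erase (fun _ => pX) (fun t => if t = x then (1 : ℝ) else 0) i

end CoordChannel

section Source

variable {X Y Xh : Type*}

lemma IsPMF2.sum_swap [Fintype X] [Fintype Y] {pxy : X → Y → ℝ} (hpxy : IsPMF2 pxy) :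
    ∑ y, ∑ x, pxy x y = 1 :=
  sum_comm.trans hpxy.2

lemma IsChannel.pi {ι : Type*} [Fintype ι] [DecidableEq ι] [Fintype Xh] {K : X → Xh → ℝ}
    (hK : IsChannel K) : IsChannel fun (xn : ι → X) (zn : ι → Xh) => ∏ i, K (xn i) (zn i) :=
  ⟨fun _ _ => prod_nonneg fun i _ => hK.1 _ _, fun xn => by
    rw [← Fintype.prod_sum (fun i z => K (xn i) z)]
    exact prod_eq_one fun i _ => hK.2 _⟩

lemma IsChannel.sum_mul {ι : Type*} [Fintype ι] [Fintype Xh] {w : ι → ℝ} (hw0 : ∀ i, 0 ≤ w i)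
    (hw1 : ∑ i, w i = 1) {K : ι → X → Xh → ℝ} (hK : ∀ i, IsChannel (K i)) :
    IsChannel fun x z => ∑ i, w i * K i x z := by
  refine ⟨fun x z => sum_nonneg fun i _ => mul_nonneg (hw0 i) ((hK i).1 x z), fun x => ?_⟩
  rw [sum_comm]
  simp only [← mul_sum, (hK _).2, mul_one, hw1]

lemma singleYZ_nonneg [Fintype X] [Fintype Y] [Fintype Xh] {pxy : X → Y → ℝ} (hpxy : IsPMF2 pxy)
    {K : X → Xh → ℝ} (hK : IsChannel K) (y : Y) (z : Xh) : 0 ≤ singleYZ pxy K y z :=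
  sum_nonneg fun x _ => mul_nonneg (hpxy.1 x y) (hK.1 x z)

lemma sum_singleYZ_right [Fintype X] [Fintype Xh] (pxy : X → Y → ℝ) {K : X → Xh → ℝ}
    (hK : IsChannel K) (y : Y) : ∑ z, singleYZ pxy K y z = ∑ x, pxy x y := by
  simp only [singleYZ]
  rw [sum_comm]
  simp only [← mul_sum, hK.2, mul_one]

lemma singleCost_nonneg [Fintype X] [Fintype Y] [Fintype Xh] {pxy : X → Y → ℝ}
    (hpxy : IsPMF2 pxy) {K : X → Xh → ℝ} (hK : IsChannel K) {c : X → Xh → ℝ}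
    (hc : ∀ x z, 0 ≤ c x z) : 0 ≤ singleCost pxy K c :=
  sum_nonneg fun x _ => sum_nonneg fun z _ =>
    mul_nonneg (mul_nonneg (sum_nonneg fun y _ => hpxy.1 x y) (hK.1 x z)) (hc x z)

lemma singleYZ_sum_mul {ι : Type*} [Fintype ι] [Fintype X] (pxy : X → Y → ℝ) (w : ι → ℝ)
    (K : ι → X → Xh → ℝ) :
    singleYZ pxy (fun x z => ∑ i, w i * K i x z) =
      fun y z => ∑ i, w i * singleYZ pxy (K i) y z := by
  funext y z
  simp only [singleYZ, mul_sum]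
  rw [sum_comm]
  exact sum_congr rfl fun _ _ => sum_congr rfl fun _ _ => by ring

lemma singleCost_sum_mul {ι : Type*} [Fintype ι] [Fintype X] [Fintype Y] [Fintype Xh]
    (pxy : X → Y → ℝ) (w : ι → ℝ) (K : ι → X → Xh → ℝ) (c : X → Xh → ℝ) :
    singleCost pxy (fun x z => ∑ i, w i * K i x z) c = ∑ i, w i * singleCost pxy (K i) c := by
  simp only [singleCost, mul_sum, sum_mul]
  refine ((sum_congr rfl fun _ _ => sum_comm).trans sum_comm).trans
    (sum_congr rfl fun _ _ => sum_congr rfl fun _ _ => sum_congr rfl fun _ _ =>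
      sum_congr rfl fun _ _ => by ring)

variable {n : ℕ}

lemma costn_eq [Fintype X] [Fintype Y] [Fintype Xh] (pxy : X → Y → ℝ)
    (W : (Fin n → X) → (Fin n → Xh) → ℝ) (c : X → Xh → ℝ) :
    costn n pxy W c = (1 / n : ℝ) *
      ∑ i, ∑ xn, ∑ zn, (∏ j, ∑ y, pxy (xn j) y) * W xn zn * c (xn i) (zn i) := by
  simp only [costn, mul_sum]
  refine ((sum_congr rfl fun _ _ => sum_comm).trans sum_comm).trans
    (sum_congr rfl fun _ _ => sum_congr rfl fun _ _ => sum_congr rfl fun _ _ => by ring)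

lemma sum_sum_iidJoint_right [Fintype X] [Fintype Xh] (pxy : X → Y → ℝ)
    {W : (Fin n → X) → (Fin n → Xh) → ℝ} (hW : IsChannel W) (yn : Fin n → Y) :
    ∑ zn, ∑ xn, iidJoint n pxy W yn xn zn = ∏ j, ∑ x, pxy x (yn j) := by
  rw [sum_comm]
  simp only [iidJoint, ← mul_sum, hW.2, mul_one]
  exact (Fintype.prod_sum fun j x => pxy x (yn j)).symm

lemma sum_iidJoint_nonneg [Fintype X] [Fintype Y] [Fintype Xh] {pxy : X → Y → ℝ}
    (hpxy : IsPMF2 pxy) {W : (Fin n → X) → (Fin n → Xh) → ℝ} (hW : IsChannel W)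
    (yn : Fin n → Y) (zn : Fin n → Xh) : 0 ≤ ∑ xn, iidJoint n pxy W yn xn zn :=
  sum_nonneg fun xn _ => mul_nonneg (prod_nonneg fun _ _ => hpxy.1 _ _) (hW.1 xn zn)

lemma sum_sum_sum_iidJoint [Fintype X] [Fintype Y] [Fintype Xh] {pxy : X → Y → ℝ}
    (hpxy : IsPMF2 pxy) {W : (Fin n → X) → (Fin n → Xh) → ℝ} (hW : IsChannel W) :
    ∑ yn, ∑ zn, ∑ xn, iidJoint n pxy W yn xn zn = 1 := by
  simp only [sum_sum_iidJoint_right pxy hW, ← Fintype.prod_sum fun (_ : Fin n) y => ∑ x, pxy x y,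
    hpxy.sum_swap, prod_const_one]

lemma coordMarginal_iidJoint [Fintype X] [Fintype Y] [Fintype Xh] [DecidableEq X]
    [DecidableEq Y] [DecidableEq Xh] (pxy : X → Y → ℝ) (W : (Fin n → X) → (Fin n → Xh) → ℝ)
    (i : Fin n) :
    coordMarginal (fun yn zn => ∑ xn, iidJoint n pxy W yn xn zn) i =
      singleYZ pxy (coordChannel (fun x => ∑ y, pxy x y) W i) := by
  funext y z
  have hY (xn : Fin n → X) :
      ∑ yn : Fin n → Y, (∏ j, pxy (xn j) (yn j)) * (if yn i = y then 1 else 0) =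
        pxy (xn i) y * ∏ j ∈ univ.erase i, ∑ y', pxy (xn j) y' := by
    have h := sum_pi_mul_prod_erase (fun j y' => pxy (xn j) y')
      (fun y' => if y' = y then pxy (xn i) y' else 0) i
    simp only [sum_ite_eq', mem_univ, if_true] at h
    rw [← h]
    refine sum_congr rfl fun yn _ => ?_
    rw [← mul_prod_erase _ _ (mem_univ i)]
    split_ifs <;> ring
  have hR := sum_mul_coordMarginal
    (P := fun xn zn => (∏ j ∈ univ.erase i, ∑ y', pxy (xn j) y') * W xn zn) i
    fun x z' => pxy x y * (if z' = z then 1 else 0)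
  simp only [mul_ite, mul_one, mul_zero, sum_ite_eq', mem_univ, if_true] at hR
  simp only [singleYZ, coordChannel, mul_comm (pxy _ y), hR]
  calc coordMarginal (fun yn zn => ∑ xn, iidJoint n pxy W yn xn zn) i y z
      = ∑ yn : Fin n → Y, ∑ zn : Fin n → Xh, ∑ xn : Fin n → X, (if zn i = z then W xn zn else 0) *
          ((∏ j, pxy (xn j) (yn j)) * if yn i = y then 1 else 0) := by
        refine sum_congr rfl fun yn _ => sum_congr rfl fun zn _ => ?_
        simp only [iidJoint, ite_and]
        split_ifs <;> simp [mul_comm]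
    _ = ∑ xn : Fin n → X, ∑ zn : Fin n → Xh, (if zn i = z then W xn zn else 0) *
          ∑ yn : Fin n → Y, (∏ j, pxy (xn j) (yn j)) * if yn i = y then 1 else 0 := by
        simp only [mul_sum]
        exact (sum_congr rfl fun _ _ => sum_comm).trans
          (sum_comm.trans (sum_congr rfl fun _ _ => sum_comm))
    _ = _ := by
        simp only [hY]
        refine sum_congr rfl fun xn _ => sum_congr rfl fun zn _ => ?_
        split_ifs <;> ring

theorem exists_channel_MI_eq_costn_eq [Fintype X] [Fintype Y] [Fintype Xh] {pxy : X → Y → ℝ}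
    (hn : 0 < n) (hpxy : IsPMF2 pxy) (c : X → Xh → ℝ)
    {K : X → Xh → ℝ} (hK : IsChannel K) :
    ∃ W : (Fin n → X) → (Fin n → Xh) → ℝ, IsChannel W ∧
      MI (fun yn zn => ∑ xn, iidJoint n pxy W yn xn zn) = n * MI (singleYZ pxy K) ∧
      costn n pxy W c = singleCost pxy K c := by
  refine ⟨fun xn zn => ∏ i, K (xn i) (zn i), hK.pi, ?_, ?_⟩
  · have hjoint : (fun yn zn => ∑ xn, iidJoint n pxy (fun xn zn => ∏ i, K (xn i) (zn i)) yn xn zn)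
        = fun (yn : Fin n → Y) (zn : Fin n → Xh) => ∏ i, singleYZ pxy K (yn i) (zn i) := by
      funext yn zn
      simp only [iidJoint, ← prod_mul_distrib]
      exact (Fintype.prod_sum fun i x => pxy x (yn i) * K x (zn i)).symm
    have hq1 : ∑ y, ∑ z, singleYZ pxy K y z = 1 := by
      simp only [sum_singleYZ_right pxy hK, hpxy.sum_swap]
    rw [hjoint, MI_pi (singleYZ_nonneg hpxy hK) hq1, Fintype.card_fin]
  · have hq1 : ∑ p : X × Xh, (∑ y, pxy p.1 y) * K p.1 p.2 = 1 := by
      simp only [Fintype.sum_prod_type, ← mul_sum, hK.2, mul_one]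
      exact hpxy.2
    have hcoord (i : Fin n) : ∑ xn : Fin n → X, ∑ zn : Fin n → Xh,
        (∏ j, ∑ y, pxy (xn j) y) * (∏ j, K (xn j) (zn j)) * c (xn i) (zn i) =
          singleCost pxy K c := by
      rw [sum_sum_eq_sum_pi_prod (fun xn zn => (∏ j, ∑ y, pxy (xn j) y) * (∏ j, K (xn j) (zn j)) *
        c (xn i) (zn i))]
      simp only [← prod_mul_distrib]
      rw [sum_pi_prod_mul_apply hq1 (fun p => c p.1 p.2) i, Fintype.sum_prod_type]
      rfl
    rw [costn_eq, sum_congr rfl fun i _ => hcoord i, sum_const, card_univ, Fintype.card_fin,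
      nsmul_eq_mul, ← mul_assoc, one_div_mul_cancel (by exact_mod_cast hn.ne'), one_mul]

theorem exists_channel_MI_le_costn_eq [Fintype X] [Fintype Y] [Fintype Xh] {pxy : X → Y → ℝ}
    (hn : 0 < n) (hpxy : IsPMF2 pxy) (c : X → Xh → ℝ)
    {W : (Fin n → X) → (Fin n → Xh) → ℝ} (hW : IsChannel W) :
    ∃ K : X → Xh → ℝ, IsChannel K ∧
      MI (singleYZ pxy K) ≤ MI (fun yn zn => ∑ xn, iidJoint n pxy W yn xn zn) / n ∧
      singleCost pxy K c = costn n pxy W c := by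
  classical
  set P : (Fin n → Y) → (Fin n → Xh) → ℝ := fun yn zn => ∑ xn, iidJoint n pxy W yn xn zn
  set pX : X → ℝ := fun x => ∑ y, pxy x y
  set K : Fin n → X → Xh → ℝ := coordChannel pX W
  have hw1 : ∑ _i : Fin n, (1 / n : ℝ) = 1 := by
    rw [sum_const, card_univ, Fintype.card_fin, nsmul_eq_mul,
      mul_one_div_cancel (by exact_mod_cast hn.ne')]
  have hK (i : Fin n) : IsChannel (K i) :=
    isChannel_coordChannel (fun x => sum_nonneg fun y _ => hpxy.1 x y) hpxy.2 hW i
  refine ⟨fun x z => ∑ i, (1 / n : ℝ) * K i x z, IsChannel.sum_mul (fun _ => by positivity) hw1 hK,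
    ?_, ?_⟩
  · calc MI (singleYZ pxy fun x z => ∑ i, (1 / n : ℝ) * K i x z)
        ≤ ∑ i, (1 / n : ℝ) * MI (singleYZ pxy (K i)) := by
          rw [singleYZ_sum_mul]
          exact MI_sum_mul_le (fun _ => by positivity) hw1
            (fun i => singleYZ_nonneg hpxy (hK i)) fun i => sum_singleYZ_right pxy (hK i)
      _ = (1 / n : ℝ) * ∑ i, MI (coordMarginal P i) := by
          simp only [K, P, coordMarginal_iidJoint, mul_sum]
          rfl
      _ ≤ MI P / n := by
          rw [one_div_mul_eq_div]
          exact div_le_div_of_nonneg_right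
            (sum_MI_coordMarginal_le (sum_iidJoint_nonneg hpxy hW) (sum_sum_sum_iidJoint hpxy hW)
              hpxy.sum_swap (sum_sum_iidJoint_right pxy hW)) (Nat.cast_nonneg n)
  · have hcoord (i : Fin n) : singleCost pxy (K i) c =
        ∑ xn, ∑ zn, (∏ j, ∑ y, pxy (xn j) y) * W xn zn * c (xn i) (zn i) :=
      sum_mul_coordChannel pX W i c
    rw [singleCost_sum_mul, costn_eq, mul_sum]
    simp only [hcoord]

end Source

theorem stmt4_general {X Y Xh : Type*} [Fintype X] [Fintype Y] [Fintype Xh]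
    (n : ℕ) (hn : 0 < n)
    (pxy : X → Y → ℝ) (hpxy : IsPMF2 pxy)
    (c : X → Xh → ℝ) (hc : ∀ x z, 0 ≤ c x z) (ε : ℝ) :
    sInf {Γ : ℝ | 0 ≤ Γ ∧ ∃ W : (Fin n → X) → (Fin n → Xh) → ℝ, IsChannel W ∧
        MI (fun yn zn => ∑ xn, iidJoint n pxy W yn xn zn) ≤ ε ∧ costn n pxy W c ≤ Γ}
      = sInf {v | ∃ K : X → Xh → ℝ, IsChannel K ∧ MI (singleYZ pxy K) ≤ ε / n ∧
        v = singleCost pxy K c} := by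
  apply csInf_eq_csInf_of_forall_exists_le
  · rintro Γ ⟨-, W, hW, hMI, hcost⟩
    obtain ⟨K, hK, hKMI, hKcost⟩ := exists_channel_MI_le_costn_eq hn hpxy c hW
    exact ⟨_, ⟨K, hK, hKMI.trans (div_le_div_of_nonneg_right hMI n.cast_nonneg), rfl⟩,
      hKcost ▸ hcost⟩
  · rintro _ ⟨K, hK, hMI, rfl⟩
    obtain ⟨W, hW, hWMI, hWcost⟩ := exists_channel_MI_eq_costn_eq hn hpxy c hK
    refine ⟨_, ⟨singleCost_nonneg hpxy hK hc, W, hW, ?_, hWcost.le⟩, le_rfl⟩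
    rw [hWMI, ← le_div_iff₀' (by exact_mod_cast hn)]
    exact hMI

/-- Single-letter characterization of the non-asymptotic minimum average cost:
`C*_a(n,ε) = min_{X̂ : Y−X−X̂, I(Y;X̂) ≤ ε/n} E[c(X,X̂)]`. -/
theorem stmt4 {X Y Xh : Type*} [Fintype X] [Fintype Y] [Fintype Xh] [Nonempty Xh]
    (n : ℕ) (hn : 0 < n)
    (pxy : X → Y → ℝ) (hpxy : IsPMF2 pxy)
    (c : X → Xh → ℝ) (hc : ∀ x z, 0 ≤ c x z) (ε : ℝ) (hε : 0 ≤ ε) :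
    sInf {Γ : ℝ | 0 ≤ Γ ∧ ∃ W : (Fin n → X) → (Fin n → Xh) → ℝ, IsChannel W ∧
        MI (fun yn zn => ∑ xn, iidJoint n pxy W yn xn zn) ≤ ε ∧ costn n pxy W c ≤ Γ}
      = sInf {v | ∃ K : X → Xh → ℝ, IsChannel K ∧ MI (singleYZ pxy K) ≤ ε / n ∧
        v = singleCost pxy K c} :=
  stmt4_general n hn pxy hpxy c hc ε
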